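/- arXiv:0901.2655 — 2 statements merged into one kernel-verified Lean document; each statement's English description precedes it below -/
import Mathlib

section
/- Let β be a real number and let m be a positive integer. For every real x > 1, the m-th derivative of the function x ↦ (ln x)^{β} (real power) satisfies ((ln x)^{β})^{(m)} = x^{-m} · Σ_{i=1}^{m} s(m,i)·(β)_i·(ln x)^{β-i}. -/
/-- Signed Stirling numbers of the first kind `s(n, k)`. -/
def stirling1 : ℕ → ℕ → ℤ
  | 0, 0 => 1
  | 0, _ + 1 => 0
  | n + 1, 0 => -(n : ℤ) * stirling1 n 0
  | n + 1, k + 1 => stirling1 n k - (n : ℤ) * stirling1 n (k + 1)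

/-- Falling factorial `(β)_i = β (β-1) ⋯ (β-i+1)`, with `(β)_0 = 1`. -/
noncomputable def fall (β : ℝ) (i : ℕ) : ℝ := ∏ j ∈ Finset.range i, (β - j)

/-!
Write `f = (log ·) ^ β` and `L = log x`. Differentiating `x ^ (-m) · ∑ₖ s(m,k) (β)ₖ L ^ (β - k)`
once gives `x ^ (-(m+1))` times `∑ₖ s(m,k) (β)ₖ₊₁ L ^ (β - k - 1) - m ∑ₖ s(m,k) (β)ₖ L ^ (β - k)`,
which is the same kind of sum for `m + 1` by the recurrence of the Stirling numbers. Induction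
from `f⁽⁰⁾ = f` gives the formula wherever `L ≠ 0` (the real power `L ^ p` has derivative
`p L ^ (p - 1)` at every `L ≠ 0`, negative or not); for `m > 0` the term `k = 0` vanishes.
-/

open Finset

theorem stirling1_succ_zero (n : ℕ) : stirling1 (n + 1) 0 = -(n : ℤ) * stirling1 n 0 := rfl

theorem stirling1_succ_succ (n k : ℕ) :
    stirling1 (n + 1) (k + 1) = stirling1 n k - (n : ℤ) * stirling1 n (k + 1) := rfl

theorem stirling1_zero_right {n : ℕ} (hn : n ≠ 0) : stirling1 n 0 = 0 := by
  obtain ⟨n, rfl⟩ := Nat.exists_eq_succ_of_ne_zero hn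
  induction n with
  | zero => rfl
  | succ n ih => rw [stirling1_succ_zero, ih n.succ_ne_zero, mul_zero]

theorem stirling1_eq_zero_of_lt : ∀ {n k : ℕ}, n < k → stirling1 n k = 0
  | 0, _ + 1, _ => rfl
  | n + 1, k + 1, h => by
    rw [stirling1_succ_succ, stirling1_eq_zero_of_lt (by omega),
      stirling1_eq_zero_of_lt (by omega), mul_zero, sub_zero]

theorem sum_range_stirling1_succ_mul {R : Type*} [CommRing R] (n : ℕ) (F : ℕ → R) :
    ∑ k ∈ range (n + 2), (stirling1 (n + 1) k : R) * F k =
      ∑ k ∈ range (n + 1), (stirling1 n k : R) * F (k + 1) -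
        n * ∑ k ∈ range (n + 1), (stirling1 n k : R) * F k := by
  have htop : ∑ k ∈ range (n + 2), (stirling1 n k : R) * F k =
      ∑ k ∈ range (n + 1), (stirling1 n k : R) * F k := by
    rw [sum_range_succ, stirling1_eq_zero_of_lt n.lt_succ_self, Int.cast_zero, zero_mul, add_zero]
  rw [← htop, sum_range_succ', sum_range_succ' (fun k => (stirling1 n k : R) * F k)]
  simp only [stirling1_succ_succ, stirling1_succ_zero, Int.cast_sub, Int.cast_mul, Int.cast_neg,
    Int.cast_natCast, sub_mul, sum_sub_distrib, mul_add, mul_sum, mul_assoc]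
  ring

theorem fall_succ (β : ℝ) (k : ℕ) : fall β (k + 1) = fall β k * (β - k) :=
  prod_range_succ _ _

theorem hasDerivAt_fall_mul_log_rpow (β : ℝ) (k : ℕ) {x : ℝ} (hx : Real.log x ≠ 0) :
    HasDerivAt (fun y => fall β k * Real.log y ^ (β - k))
      (x⁻¹ * (fall β (k + 1) * Real.log x ^ (β - (k + 1 : ℕ)))) x := by
  have hx0 : x ≠ 0 := (Real.log_ne_zero.mp hx).1
  refine (((Real.hasDerivAt_log hx0).rpow_const (p := β - k) (Or.inl hx)).const_mul
    (fall β k)).congr_deriv ?_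
  rw [fall_succ, Nat.cast_succ, ← sub_sub]
  ring

noncomputable def logRpowDerivFormula (β : ℝ) (m : ℕ) (x : ℝ) : ℝ :=
  x ^ (-(m : ℤ)) * ∑ k ∈ range (m + 1), (stirling1 m k : ℝ) * (fall β k * Real.log x ^ (β - k))

theorem hasDerivAt_logRpowDerivFormula (β : ℝ) (m : ℕ) {x : ℝ} (hx : Real.log x ≠ 0) :
    HasDerivAt (logRpowDerivFormula β m) (logRpowDerivFormula β (m + 1) x) x := by
  have hx0 : x ≠ 0 := (Real.log_ne_zero.mp hx).1
  have hsum := HasDerivAt.fun_sum (u := range (m + 1)) fun k _ =>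
    (hasDerivAt_fall_mul_log_rpow β k hx).const_mul (stirling1 m k : ℝ)
  have hpow : HasDerivAt (fun y : ℝ => y ^ (-(m : ℤ))) (-(m : ℝ) * x ^ (-(m : ℤ) - 1)) x := by
    simpa using hasDerivAt_zpow (-(m : ℤ)) x (Or.inl hx0)
  have hinv : x ^ (-((m + 1 : ℕ) : ℤ)) = x ^ (-(m : ℤ)) * x⁻¹ := by
    rw [← zpow_sub_one₀ hx0, Nat.cast_succ, neg_add']
  refine (hpow.mul hsum).congr_deriv ?_
  simp only [logRpowDerivFormula, hinv, zpow_sub_one₀ hx0, sum_range_stirling1_succ_mul,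
    mul_left_comm _ x⁻¹, ← mul_sum]
  push_cast
  ring

theorem iteratedDeriv_log_rpow_eq_logRpowDerivFormula (β : ℝ) (m : ℕ) {x : ℝ}
    (hx : Real.log x ≠ 0) :
    iteratedDeriv m (fun y : ℝ => Real.log y ^ β) x = logRpowDerivFormula β m x := by
  induction m generalizing x with
  | zero => simp [logRpowDerivFormula, stirling1, fall]
  | succ m ih =>
    have hx0 : x ≠ 0 := (Real.log_ne_zero.mp hx).1
    have hnear : iteratedDeriv m (fun y : ℝ => Real.log y ^ β) =ᶠ[nhds x]
        logRpowDerivFormula β m :=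
      ((Real.continuousAt_log hx0).eventually_ne hx).mono fun y hy => ih hy
    rw [iteratedDeriv_succ, hnear.deriv_eq, (hasDerivAt_logRpowDerivFormula β m hx).deriv]

theorem iteratedDeriv_log_rpow (β : ℝ) (m : ℕ) (hm : 0 < m) :
    ∀ x : ℝ, 1 < x →
      iteratedDeriv m (fun y : ℝ => Real.log y ^ β) x =
        x ^ (-(m : ℤ)) * ∑ i ∈ Finset.Icc 1 m,
          (stirling1 m i : ℝ) * fall β i * Real.log x ^ (β - i) := by
  intro x hx
  rw [iteratedDeriv_log_rpow_eq_logRpowDerivFormula β m (Real.log_pos hx).ne',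
    logRpowDerivFormula, range_eq_Ico, sum_eq_sum_Ico_succ_bot (Nat.zero_lt_succ m),
    stirling1_zero_right hm.ne', Int.cast_zero, zero_mul, zero_add, Nat.succ_eq_add_one,
    Ico_add_one_right_eq_Icc]
  simp only [mul_assoc]
end

section
/- Let a be a positive integer and let n be an integer with 1 ≤ n ≤ a. Then s(n,1,-a) = (H_a - H_{a-n}) · a!/(a-n)!. -/
/-!
`s(n, 0, α)` is the falling product `(-α)(-α - 1)⋯(-α - n + 1)`, and the recurrence for `k = 1` is
that of its logarithmic derivative: `s(n, 1, α) = s(n, 0, α) · ∑_{i<n} 1/(-α - i)` as long as no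
factor vanishes. For `α = -a` with `n ≤ a` the product is `a!/(a - n)!` and the sum is
`1/a + ⋯ + 1/(a - n + 1) = H_a - H_{a-n}`.
-/

/-- Non-central Stirling numbers of the first kind `s(n, k, α)`. -/
noncomputable def ncStirling : ℕ → ℕ → ℝ → ℝ
  | 0, 0, _ => 1
  | 0, _ + 1, _ => 0
  | n + 1, 0, α => (-α - n) * ncStirling n 0 α
  | n + 1, k + 1, α => ncStirling n k α + (-α - n) * ncStirling n (k + 1) α

/-- Harmonic number `H_n = 1 + 1/2 + ⋯ + 1/n`, `H_0 = 0`. -/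
noncomputable def H (n : ℕ) : ℝ := ∑ k ∈ Finset.range n, (1 : ℝ) / (k + 1)

open Finset Polynomial

lemma H_succ (m : ℕ) : H (m + 1) = H m + 1 / (m + 1) := by
  simp [H, sum_range_succ]

lemma H_sub_H_sub_eq_sum {a n : ℕ} (hn : n ≤ a) :
    H a - H (a - n) = ∑ i ∈ range n, 1 / ((a : ℝ) - i) := by
  induction n with
  | zero => simp
  | succ n ih =>
    have hsplit : a - n = (a - (n + 1)) + 1 := by omega
    have hcast : ((a - (n + 1) : ℕ) : ℝ) + 1 = a - n := by
      push_cast [Nat.cast_sub hn]; ring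
    rw [sum_range_succ, ← ih (by omega), hsplit, H_succ, hcast]
    ring

lemma ncStirling_zero_eq_descPochhammer_eval (n : ℕ) (α : ℝ) :
    ncStirling n 0 α = (descPochhammer ℝ n).eval (-α) := by
  induction n with
  | zero => simp [ncStirling]
  | succ n ih => rw [ncStirling, descPochhammer_succ_eval, ih, mul_comm]

lemma ncStirling_one_eq_ncStirling_zero_mul_sum (n : ℕ) (α : ℝ) (hα : ∀ i < n, -α - i ≠ 0) :
    ncStirling n 1 α = ncStirling n 0 α * ∑ i ∈ range n, 1 / (-α - i) := by
  induction n with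
  | zero => simp [ncStirling]
  | succ n ih =>
    have hn : -α - n ≠ 0 := hα n n.lt_succ_self
    rw [ncStirling, ncStirling, ih fun i hi => hα i (Nat.lt_succ_of_lt hi), sum_range_succ]
    field_simp
    ring

lemma ncStirling_one_neg_natCast {a n : ℕ} (hn : n ≤ a) :
    ncStirling n 1 (-(a : ℝ)) = a.descFactorial n * (H a - H (a - n)) := by
  have hα : ∀ i < n, -(-(a : ℝ)) - i ≠ 0 := fun i hi => by
    rw [neg_neg, sub_ne_zero, ne_eq, Nat.cast_inj]; omega
  rw [ncStirling_one_eq_ncStirling_zero_mul_sum n _ hα, ncStirling_zero_eq_descPochhammer_eval,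
    neg_neg, descPochhammer_eval_eq_descFactorial, H_sub_H_sub_eq_sum hn]

theorem ncStirling_one_neg_int_harmonic_general (a : ℕ) (n : ℕ) (h2 : n ≤ a) :
    ncStirling n 1 (-(a : ℝ)) =
      (H a - H (a - n)) * (a.factorial : ℝ) / ((a - n).factorial : ℝ) := by
  rw [ncStirling_one_neg_natCast h2, ← Nat.factorial_mul_descFactorial h2]
  push_cast
  field_simp

theorem ncStirling_one_neg_int_harmonic (a : ℕ) (ha : 0 < a) (n : ℕ)
    (h1 : 1 ≤ n) (h2 : n ≤ a) :
    ncStirling n 1 (-(a : ℝ)) =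
      (H a - H (a - n)) * (a.factorial : ℝ) / ((a - n).factorial : ℝ) :=
  ncStirling_one_neg_int_harmonic_general a n h2
end
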